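/- Let H be a complex vector space, let J : H → H be a bijective conjugate-linear map, let γ, D : H → H be complex-linear maps, and let ε, ε', ε'' ∈ {1, −1}. Assume γ ∘ γ = id_H, D ∘ γ = −γ ∘ D, J ∘ J = ε·id_H, D ∘ J = ε'·(J ∘ D), and J ∘ γ = ε''·(γ ∘ J). Then J' := J ∘ γ is a bijective conjugate-linear map satisfying J' ∘ J' = (ε·ε'')·id_H, D ∘ J' = (−ε')·(J' ∘ D), and J' ∘ γ = ε''·(γ ∘ J'). (This is the passage from the real structure J with KO-signs (ε, ε', ε'') to the real structure Jγ with KO-signs (ε·ε'', −ε', ε'').) -/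

import Mathlib

section SignedCommutation

variable {R M : Type*}

theorem sq_comp_eq_smul_of_commute_smul [CommSemiring R] [AddCommMonoid M] [Module R M]
    {J : M → M} {γ : M →ₗ[R] M} {ε ε'' : R} (hγ : Function.Involutive γ)
    (hJJ : ∀ x, J (J x) = ε • x) (hJγ : ∀ x, J (γ x) = ε'' • γ (J x)) (x : M) :
    J (γ (J (γ x))) = (ε * ε'') • x := by
  rw [hJγ, hJJ, map_smul, hγ, smul_smul, mul_comm]

theorem anticommute_comp_of_commute_smul [Ring R] [AddCommGroup M] [Module R M]
    {J γ D : M → M} {ε' : R} (hJadd : ∀ x y, J (x + y) = J x + J y)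
    (hDγ : ∀ x, D (γ x) = -γ (D x)) (hDJ : ∀ x, D (J x) = ε' • J (D x)) (x : M) :
    D (J (γ x)) = (-ε') • J (γ (D x)) := by
  have hJneg : ∀ y, J (-y) = -J y := (AddMonoidHom.mk' J hJadd).map_neg
  rw [hDJ, hDγ, hJneg, smul_neg, neg_smul]

end SignedCommutation

theorem real_structure_gamma_twist_general
    {H : Type*} [AddCommGroup H] [Module ℂ H]
    (J : H → H) (γ D : H →ₗ[ℂ] H) (ε ε' ε'' : ℂ)
    (hJbij : Function.Bijective J)
    (hJadd : ∀ x y : H, J (x + y) = J x + J y)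
    (hJconj : ∀ (c : ℂ) (x : H), J (c • x) = (starRingEnd ℂ) c • J x)
    (hγγ : ∀ x : H, γ (γ x) = x)
    (hDγ : ∀ x : H, D (γ x) = -γ (D x))
    (hJJ : ∀ x : H, J (J x) = ε • x)
    (hDJ : ∀ x : H, D (J x) = ε' • J (D x))
    (hJγ : ∀ x : H, J (γ x) = ε'' • γ (J x)) :
    Function.Bijective (fun x : H => J (γ x)) ∧
    (∀ x y : H, J (γ (x + y)) = J (γ x) + J (γ y)) ∧
    (∀ (c : ℂ) (x : H), J (γ (c • x)) = (starRingEnd ℂ) c • J (γ x)) ∧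
    (∀ x : H, J (γ (J (γ x))) = (ε * ε'') • x) ∧
    (∀ x : H, D (J (γ x)) = (-ε') • J (γ (D x))) ∧
    (∀ x : H, J (γ (γ x)) = ε'' • γ (J (γ x))) :=
  ⟨hJbij.comp (Function.Involutive.bijective hγγ),
    fun x y => by rw [map_add, hJadd],
    fun c x => by rw [map_smul, hJconj],
    sq_comp_eq_smul_of_commute_smul hγγ hJJ hJγ,
    anticommute_comp_of_commute_smul hJadd hDγ hDJ,
    fun x => hJγ (γ x)⟩

/-- Passage from the real structure `J` with KO-signs `(ε, ε', ε'')` to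
the real structure `J' = J ∘ γ` with KO-signs `(ε·ε'', −ε', ε'')`. -/
theorem real_structure_gamma_twist
    {H : Type*} [AddCommGroup H] [Module ℂ H]
    (J : H → H) (γ D : H →ₗ[ℂ] H) (ε ε' ε'' : ℂ)
    (hε : ε = 1 ∨ ε = -1) (hε' : ε' = 1 ∨ ε' = -1) (hε'' : ε'' = 1 ∨ ε'' = -1)
    (hJbij : Function.Bijective J)
    (hJadd : ∀ x y : H, J (x + y) = J x + J y)
    (hJconj : ∀ (c : ℂ) (x : H), J (c • x) = (starRingEnd ℂ) c • J x)
    (hγγ : ∀ x : H, γ (γ x) = x)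
    (hDγ : ∀ x : H, D (γ x) = -γ (D x))
    (hJJ : ∀ x : H, J (J x) = ε • x)
    (hDJ : ∀ x : H, D (J x) = ε' • J (D x))
    (hJγ : ∀ x : H, J (γ x) = ε'' • γ (J x)) :
    Function.Bijective (fun x : H => J (γ x)) ∧
    (∀ x y : H, J (γ (x + y)) = J (γ x) + J (γ y)) ∧
    (∀ (c : ℂ) (x : H), J (γ (c • x)) = (starRingEnd ℂ) c • J (γ x)) ∧
    (∀ x : H, J (γ (J (γ x))) = (ε * ε'') • x) ∧
    (∀ x : H, D (J (γ x)) = (-ε') • J (γ (D x))) ∧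
    (∀ x : H, J (γ (γ x)) = ε'' • γ (J (γ x))) :=
  real_structure_gamma_twist_general J γ D ε ε' ε'' hJbij hJadd hJconj hγγ hDγ hJJ hDJ hJγ
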